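/- In the shifted square grid, every closed disk of radius r < 1/4 intersects at most three tiles: for every p ∈ ℝ² and every r with 0 ≤ r < 1/4, the number of pairs (i, j) ∈ ℤ² such that T(i, j) intersects closedBall(p, r) is at most three. -/
import Mathlib


open Metric Set

/-- The tile `T(i, j) = [i, i+1) × [j + i/2, j + i/2 + 1)` of the shifted square grid,
in which each column of unit squares is shifted vertically by half a square's height
relative to the adjacent column. -/
def shiftedSquare (i j : ℤ) : Set (EuclideanSpace ℝ (Fin 2)) :=
  {x | x 0 ∈ Ico (i : ℝ) ((i : ℝ) + 1) ∧
       x 1 ∈ Ico ((j : ℝ) + (i : ℝ) / 2) ((j : ℝ) + (i : ℝ) / 2 + 1)}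

lemma coord_dist_le (x p : EuclideanSpace ℝ (Fin 2)) (k : Fin 2) :
    |x k - p k| ≤ dist x p := by
  rw [EuclideanSpace.dist_eq, Fin.sum_univ_two]
  have h0 : (0:ℝ) ≤ dist (x 0) (p 0) ^ 2 := sq_nonneg _
  have h1 : (0:ℝ) ≤ dist (x 1) (p 1) ^ 2 := sq_nonneg _
  calc |x k - p k| = Real.sqrt ((x k - p k)^2) := (Real.sqrt_sq_eq_abs _).symm
    _ ≤ _ := by
        apply Real.sqrt_le_sqrt
        simp only [Real.dist_eq, sq_abs]
        fin_cases k
        · show (x 0 - p 0)^2 ≤ _; nlinarith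
        · show (x 1 - p 1)^2 ≤ _; nlinarith

lemma encard_triple_le {α : Type*} (a b c : α) : ({a, b, c} : Set α).encard ≤ 3 := by
  calc ({a, b, c} : Set α).encard ≤ ({b, c} : Set α).encard + 1 := Set.encard_insert_le _ _
    _ ≤ ({c} : Set α).encard + 1 + 1 := by gcongr; exact Set.encard_insert_le _ _
    _ = 3 := by rw [Set.encard_singleton]; rfl

/-- Every closed disk of radius `r < 1/4` intersects at most three tiles of the shifted
square grid. -/
theorem shifted_square_grid_disk_meets_at_most_three_tiles
    (p : EuclideanSpace ℝ (Fin 2)) (r : ℝ) (hr0 : 0 ≤ r) (hr : r < 1 / 4) :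
    {q : ℤ × ℤ | (shiftedSquare q.1 q.2 ∩ closedBall p r).Nonempty}.encard ≤ 3 := by
  set N := {q : ℤ × ℤ | (shiftedSquare q.1 q.2 ∩ closedBall p r).Nonempty} with hN
  -- basic real bounds from membership
  have key : ∀ i j : ℤ, (i, j) ∈ N →
      (i:ℝ) ≤ p 0 + r ∧ p 0 - r < (i:ℝ) + 1 ∧
      (j:ℝ) + (i:ℝ)/2 ≤ p 1 + r ∧ p 1 - r < (j:ℝ) + (i:ℝ)/2 + 1 := by
    intro i j hij
    obtain ⟨x, hx, hxb⟩ := hij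
    obtain ⟨⟨h00, h01⟩, h10, h11⟩ := hx
    have hd := mem_closedBall.mp hxb
    have d0 := (abs_le.mp ((coord_dist_le x p 0).trans hd))
    have d1 := (abs_le.mp ((coord_dist_le x p 1).trans hd))
    constructor; · linarith [d0.2]
    constructor; · linarith [d0.1]
    constructor; · linarith [d1.2]
    · linarith [d1.1]
  set I : ℤ := ⌊p 0 + r⌋ with hI
  set J1 : ℤ := ⌊p 1 + r - ((I:ℝ) - 1)/2⌋ with hJ1
  set J0 : ℤ := ⌊p 1 + r - (I:ℝ)/2⌋ with hJ0
  have hIle : (I:ℝ) ≤ p 0 + r := Int.floor_le _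
  -- i takes values I-1 or I
  have hi_range : ∀ i j : ℤ, (i, j) ∈ N → i = I - 1 ∨ i = I := by
    intro i j hij
    obtain ⟨h1, h2, -, -⟩ := key i j hij
    have hiI : i ≤ I := Int.le_floor.mpr h1
    have : (I:ℝ) < (i:ℝ) + 2 := by linarith
    have : I < i + 2 := by exact_mod_cast this
    omega
  -- j range per column
  have hj_range : ∀ i j : ℤ, (i, j) ∈ N →
      j ≤ ⌊p 1 + r - (i:ℝ)/2⌋ ∧ ⌊p 1 + r - (i:ℝ)/2⌋ ≤ j + 1 := by
    intro i j hij
    obtain ⟨-, -, h3, h4⟩ := key i j hij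
    have hjle : j ≤ ⌊p 1 + r - (i:ℝ)/2⌋ := Int.le_floor.mpr (by linarith)
    have hfl : (⌊p 1 + r - (i:ℝ)/2⌋ : ℝ) ≤ p 1 + r - (i:ℝ)/2 := Int.floor_le _
    have : (⌊p 1 + r - (i:ℝ)/2⌋ : ℝ) < (j:ℝ) + 2 := by linarith
    have : ⌊p 1 + r - (i:ℝ)/2⌋ < j + 2 := by exact_mod_cast this
    omega
  -- exclusion: not both "lower" corners
  have excl : ¬((I - 1, J1 - 1) ∈ N ∧ (I, J0 - 1) ∈ N) := by
    rintro ⟨hA, hB⟩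
    obtain ⟨-, -, -, hA4⟩ := key (I - 1) (J1 - 1) hA
    obtain ⟨-, -, -, hB4⟩ := key I (J0 - 1) hB
    have hJ1le : (J1:ℝ) ≤ p 1 + r - ((I:ℝ) - 1)/2 := Int.floor_le _
    have hJ0le : (J0:ℝ) ≤ p 1 + r - (I:ℝ)/2 := Int.floor_le _
    push_cast at hA4 hB4
    have h1 : (0:ℝ) < (J1:ℝ) - (J0:ℝ) := by linarith
    have h2 : (J1:ℝ) - (J0:ℝ) < 1 := by linarith
    have h1' : (0:ℤ) < J1 - J0 := by exact_mod_cast h1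
    have h2' : J1 - J0 < 1 := by exact_mod_cast h2
    omega
  have mem_cases : ∀ q ∈ N, q = (I - 1, J1 - 1) ∨ q = (I - 1, J1) ∨
      q = (I, J0 - 1) ∨ q = (I, J0) := by
    rintro ⟨i, j⟩ hq
    rcases hi_range i j hq with hi | hi <;> subst hi <;>
      obtain ⟨hj1, hj2⟩ := hj_range _ j hq
    · have : ((I:ℝ) - 1)/2 = ((I - 1 : ℤ):ℝ)/2 := by push_cast; ring
      rw [hJ1, this] at *
      rcases (by omega : j = ⌊p 1 + r - ((I - 1:ℤ):ℝ)/2⌋ - 1 ∨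
          j = ⌊p 1 + r - ((I - 1:ℤ):ℝ)/2⌋) with h | h <;> simp [h]
    · rw [hJ0] at *
      rcases (by omega : j = ⌊p 1 + r - (I:ℝ)/2⌋ - 1 ∨
          j = ⌊p 1 + r - (I:ℝ)/2⌋) with h | h <;> simp [h]
  by_cases hc : (I, J0 - 1) ∈ N
  · have hnA : (I - 1, J1 - 1) ∉ N := fun h => excl ⟨h, hc⟩
    have hsub : N ⊆ {(I - 1, J1), (I, J0 - 1), (I, J0)} := by
      intro q hq
      rcases mem_cases q hq with h | h | h | h
      · exact absurd (h ▸ hq) hnA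
      all_goals simp [h]
    exact (Set.encard_le_encard hsub).trans (encard_triple_le _ _ _)
  · have hsub : N ⊆ {(I - 1, J1 - 1), (I - 1, J1), (I, J0)} := by
      intro q hq
      rcases mem_cases q hq with h | h | h | h
      · simp [h]
      · simp [h]
      · exact absurd (h ▸ hq) hc
      · simp [h]
    exact (Set.encard_le_encard hsub).trans (encard_triple_le _ _ _)
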